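/- arXiv:1902.05593 — 2 statements merged into one kernel-verified Lean document; each statement's English description precedes it below -/
import Mathlib

section
/- Let X be an n-dimensional real Banach space and let {e_i : 1 ≤ i ≤ n} be a 1-suppression unconditional normalized basis of X. If the norm of X is strictly convex or smooth, then there exists ε > 0 such that the set A = {±e_i : i = 1,…,n} is a bounded and separated antipodal subset of the closed unit ball of X with constant d = 1 + ε; consequently H'_α(X) ≥ 2n. -/
open Metric

noncomputable section

/-- `S` is a bounded and separated antipodal subset of `X` with constant `d`. -/
def IsBSA {X : Type*} [NormedAddCommGroup X] [NormedSpace ℝ X] (S : Set X) (d : ℝ) : Prop :=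
  S ⊆ closedBall (0 : X) 1 ∧
    ∀ x ∈ S, ∀ y ∈ S, x ≠ y → ∃ f : X →L[ℝ] ℝ, ‖f‖ ≤ 1 ∧
      d ≤ f x - f y ∧ ∀ z ∈ S, f y ≤ f z ∧ f z ≤ f x

/-- The strict antipodality condition (with gap `> 1`). -/
def StrictAntipProp {X : Type*} [NormedAddCommGroup X] [NormedSpace ℝ X] (S : Set X) : Prop :=
  ∀ x ∈ S, ∀ y ∈ S, x ≠ y → ∃ f : X →L[ℝ] ℝ, ‖f‖ ≤ 1 ∧
    1 < f x - f y ∧ ∀ z ∈ S, f y ≤ f z ∧ f z ≤ f x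

/-- The strict antipodal Hadwiger number `H'_α(X)`. -/
def strictHalpha (X : Type*) [NormedAddCommGroup X] [NormedSpace ℝ X] : ℕ :=
  sSup {k : ℕ | ∃ S : Finset X, S.card = k ∧ (S : Set X) ⊆ sphere (0 : X) 1 ∧
    StrictAntipProp (S : Set X)}

/-!
Let `φ i` be the coordinate functionals of the basis; suppression with `F = {i}` gives
`‖φ i‖ ≤ 1`. For signed basis vectors `s • e i ≠ t • e j` with `i ≠ j`, the functional
`s • φ i - t • φ j` takes the values `1` and `-1` at them and lies in `[-1, 1]` on `A`, and its
norm is `< 2`: otherwise, by compactness, it attains the value `2` at some `x` in the unit ball,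
so `s • φ i` and `-t • φ j` both equal `1` at `x`; strict convexity then forces `x = s • e i`,
and smoothness forces `s • φ i = -t • φ j`, both contradicting `φ j (e i) = 0`. Dividing by the
norm gives a gap `> 1`, and as there are finitely many pairs the gap is uniformly `≥ 1 + ε`.
A strictly antipodal set is `1`-separated, so by compactness of the sphere their cardinalities
are bounded, and `H'_α(X) ≥ |A| = 2n`.
-/

section

variable {X : Type*} [NormedAddCommGroup X] [NormedSpace ℝ X]

theorem ContinuousLinearMap.exists_norm_le_one_apply_eq_norm [FiniteDimensional ℝ X]
    (f : X →L[ℝ] ℝ) : ∃ x : X, ‖x‖ ≤ 1 ∧ f x = ‖f‖ := by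
  obtain ⟨x, hx, hfx⟩ := ((isCompact_closedBall (0 : X) 1).image
    (f.continuous.norm (f := fun x => f x))).sSup_mem ((nonempty_closedBall.2 zero_le_one).image _)
  replace hfx : |f x| = ‖f‖ := by rwa [f.sSup_unitClosedBall_eq_norm] at hfx
  rw [abs_eq (norm_nonneg f)] at hfx
  rw [mem_closedBall_zero_iff] at hx
  rcases hfx with hfx | hfx
  · exact ⟨x, hx, hfx⟩
  · exact ⟨-x, by rwa [norm_neg], by rw [map_neg, hfx, neg_neg]⟩

theorem ContinuousLinearMap.norm_eq_one_of_apply_eq_one {f : X →L[ℝ] ℝ} {x : X}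
    (hf : ‖f‖ ≤ 1) (hx : ‖x‖ ≤ 1) (hfx : f x = 1) : ‖f‖ = 1 ∧ ‖x‖ = 1 := by
  have h := f.le_opNorm x
  rw [hfx, norm_one] at h
  constructor <;> nlinarith [norm_nonneg f, norm_nonneg x]

theorem exists_apply_eq_one_of_two_le_norm_sub [FiniteDimensional ℝ X] {f g : X →L[ℝ] ℝ}
    (hf : ‖f‖ ≤ 1) (hg : ‖g‖ ≤ 1) (h : 2 ≤ ‖f - g‖) :
    ∃ x : X, ‖x‖ ≤ 1 ∧ f x = 1 ∧ g x = -1 := by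
  obtain ⟨x, hx, hfgx⟩ := (f - g).exists_norm_le_one_apply_eq_norm
  have hfx : f x ≤ 1 := (le_abs_self _).trans (f.le_of_opNorm_le hf x |>.trans (by simpa))
  have hgx : -g x ≤ 1 :=
    (neg_le_abs _).trans (g.le_of_opNorm_le hg x |>.trans (by simpa))
  rw [sub_apply] at hfgx
  exact ⟨x, hx, by linarith, by linarith⟩

theorem eq_of_norm_le_one_of_apply_eq_one [StrictConvexSpace ℝ X] {f : X →L[ℝ] ℝ}
    (hf : ‖f‖ ≤ 1) {x y : X} (hx : ‖x‖ ≤ 1) (hy : ‖y‖ ≤ 1) (hfx : f x = 1) (hfy : f y = 1) :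
    x = y := by
  by_contra hne
  have hmid := norm_combo_lt_of_ne hx hy hne one_half_pos one_half_pos (add_halves 1)
  have := (le_abs_self _).trans (f.le_of_opNorm_le hf ((1 / 2 : ℝ) • x + (1 / 2 : ℝ) • y))
  simp only [map_add, map_smul, hfx, hfy, smul_eq_mul] at this
  linarith

theorem eq_of_apply_eq_one_of_existsUnique_support
    (hsmooth : ∀ x : X, x ≠ 0 → ∃! g : X →L[ℝ] ℝ, ‖g‖ = 1 ∧ g x = ‖x‖)
    {f g : X →L[ℝ] ℝ} (hf : ‖f‖ ≤ 1) (hg : ‖g‖ ≤ 1) {x : X} (hx : ‖x‖ ≤ 1)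
    (hfx : f x = 1) (hgx : g x = 1) : f = g := by
  obtain ⟨hf1, hx1⟩ := f.norm_eq_one_of_apply_eq_one hf hx hfx
  obtain ⟨hg1, -⟩ := g.norm_eq_one_of_apply_eq_one hg hx hgx
  have hx0 : x ≠ 0 := by rintro rfl; simp at hx1
  exact (hsmooth x hx0).unique ⟨hf1, by rw [hfx, hx1]⟩ ⟨hg1, by rw [hgx, hx1]⟩

theorem norm_sub_lt_two [FiniteDimensional ℝ X] (hgeom : StrictConvexSpace ℝ X ∨
      (∀ x : X, x ≠ 0 → ∃! g : X →L[ℝ] ℝ, ‖g‖ = 1 ∧ g x = ‖x‖))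
    {f g : X →L[ℝ] ℝ} (hf : ‖f‖ ≤ 1) (hg : ‖g‖ ≤ 1) {e : X} (he : ‖e‖ ≤ 1)
    (hfe : f e = 1) (hge : g e = 0) : ‖f - g‖ < 2 := by
  by_contra! h
  obtain ⟨x, hx, hfx, hgx⟩ := exists_apply_eq_one_of_two_le_norm_sub hf hg h
  rcases hgeom with hconvex | hsmooth
  · obtain rfl := eq_of_norm_le_one_of_apply_eq_one hf hx he hfx hfe
    linarith
  · have hfg := eq_of_apply_eq_one_of_existsUnique_support hsmooth hf (by rwa [norm_neg]) hx hfx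
      (by rw [neg_apply, hgx, neg_neg])
    have := congrArg (· e) hfg
    simp only [neg_apply, hfe, hge, neg_zero] at this
    exact one_ne_zero this

theorem exists_antipodal_functional_of_norm_lt_two {S : Set X} {x y : X} (g : X →L[ℝ] ℝ)
    (hg : ‖g‖ < 2) (hgx : g x = 1) (hgy : g y = -1) (hgS : ∀ z ∈ S, |g z| ≤ 1) :
    ∃ f : X →L[ℝ] ℝ, ‖f‖ ≤ 1 ∧ 1 < f x - f y ∧ ∀ z ∈ S, f y ≤ f z ∧ f z ≤ f x := by
  have hg0 : 0 < ‖g‖ := norm_pos_iff.2 (by rintro rfl; simp at hgx)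
  refine ⟨‖g‖⁻¹ • g, ?_, ?_, fun z hz => ?_⟩
  · rw [norm_smul, norm_inv, norm_norm, inv_mul_cancel₀ hg0.ne']
  · simp only [smul_apply, hgx, hgy, smul_eq_mul]
    rw [← mul_sub, lt_inv_mul_iff₀ hg0]
    linarith
  · obtain ⟨hlo, hhi⟩ := abs_le.1 (hgS z hz)
    simp only [smul_apply, hgx, hgy, smul_eq_mul]
    constructor <;> gcongr

section

variable {ι : Type*} {v : ι → X} {φ : ι → X →L[ℝ] ℝ}

theorem exists_smul_of_mem_range_union_neg {z : X}
    (hz : z ∈ Set.range v ∪ Set.range (fun i => -v i)) : ∃ i, ∃ s : ℝ, |s| = 1 ∧ z = s • v i := by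
  rcases hz with ⟨i, rfl⟩ | ⟨i, rfl⟩
  exacts [⟨i, 1, abs_one, (one_smul ℝ _).symm⟩, ⟨i, -1, by simp, by simp⟩]

theorem strictAntipProp_range_union_neg [FiniteDimensional ℝ X] [DecidableEq ι]
    (hgeom : StrictConvexSpace ℝ X ∨
      (∀ x : X, x ≠ 0 → ∃! g : X →L[ℝ] ℝ, ‖g‖ = 1 ∧ g x = ‖x‖))
    (hv : ∀ i, ‖v i‖ ≤ 1) (hφ : ∀ i, ‖φ i‖ ≤ 1)
    (hφv : ∀ i k, φ i (v k) = if k = i then 1 else 0) :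
    StrictAntipProp (Set.range v ∪ Set.range (fun i => -v i)) := by
  have happly : ∀ i k (s u : ℝ), (s • φ i) (u • v k) = if k = i then s * u else 0 := by
    intro i k s u
    simp only [smul_apply, map_smul, hφv, smul_eq_mul]
    split_ifs <;> ring
  intro x hx y hy hxy
  obtain ⟨i, s, hs, rfl⟩ := exists_smul_of_mem_range_union_neg hx
  obtain ⟨j, t, ht, rfl⟩ := exists_smul_of_mem_range_union_neg hy
  have hss : s * s = 1 := by rw [← abs_mul_abs_self, hs, one_mul]
  have htt : t * t = 1 := by rw [← abs_mul_abs_self, ht, one_mul]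
  by_cases hij : j = i
  · subst hij
    have hts : t = -s := by
      rcases abs_eq_abs.1 (hs.trans ht.symm) with h | h
      · exact absurd (by rw [h]) hxy
      · linarith
    refine exists_antipodal_functional_of_norm_lt_two (s • φ j) ?_ ?_ ?_ fun z hz => ?_
    · rw [norm_smul, Real.norm_eq_abs, hs, one_mul]
      exact (hφ j).trans_lt one_lt_two
    · rw [happly, if_pos rfl, hss]
    · rw [happly, if_pos rfl, hts, mul_neg, hss]
    · obtain ⟨k, u, hu, rfl⟩ := exists_smul_of_mem_range_union_neg hz
      rw [happly]
      split_ifs <;> simp [abs_mul, hs, hu]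
  · refine exists_antipodal_functional_of_norm_lt_two (s • φ i - t • φ j) ?_ ?_ ?_
      fun z hz => ?_
    · refine norm_sub_lt_two hgeom ?_ ?_ (e := s • v i) ?_ ?_ ?_
      · rw [norm_smul, Real.norm_eq_abs, hs, one_mul]; exact hφ i
      · rw [norm_smul, Real.norm_eq_abs, ht, one_mul]; exact hφ j
      · rw [norm_smul, Real.norm_eq_abs, hs, one_mul]; exact hv i
      · rw [happly, if_pos rfl, hss]
      · rw [happly, if_neg (Ne.symm hij)]
    · rw [sub_apply, happly, happly, if_pos rfl, if_neg (Ne.symm hij), hss, sub_zero]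
    · rw [sub_apply, happly, happly, if_pos rfl, if_neg hij, htt, zero_sub]
    · obtain ⟨k, u, hu, rfl⟩ := exists_smul_of_mem_range_union_neg hz
      rw [sub_apply, happly, happly]
      split_ifs with hki hkj
      · exact absurd (hkj ▸ hki) hij
      all_goals simp [abs_mul, hs, ht, hu]

end

open Filter Topology in
theorem StrictAntipProp.exists_isBSA {S : Set X} (hS : StrictAntipProp S) (hfin : S.Finite)
    (hball : S ⊆ closedBall 0 1) : ∃ ε : ℝ, 0 < ε ∧ IsBSA S (1 + ε) := by
  have hev : ∀ᶠ ε in 𝓝 (0 : ℝ), ∀ p ∈ S.offDiag, ∃ f : X →L[ℝ] ℝ, ‖f‖ ≤ 1 ∧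
      1 + ε ≤ f p.1 - f p.2 ∧ ∀ z ∈ S, f p.2 ≤ f z ∧ f z ≤ f p.1 := by
    refine (eventually_all_finite hfin.offDiag).2 fun p ⟨hp₁, hp₂, hne⟩ => ?_
    obtain ⟨f, hf, hgap, hord⟩ := hS p.1 hp₁ p.2 hp₂ hne
    filter_upwards [eventually_lt_nhds (sub_pos.2 hgap)] with ε hε
    exact ⟨f, hf, by linarith, hord⟩
  obtain ⟨ε, hε, hpos⟩ := ((hev.filter_mono nhdsWithin_le_nhds).and
    (self_mem_nhdsWithin (s := Set.Ioi 0))).exists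
  exact ⟨ε, hpos, hball, fun x hx y hy hxy => hε (x, y) ⟨hx, hy, hxy⟩⟩

theorem StrictAntipProp.isSeparated {S : Set X} (hS : StrictAntipProp S) :
    IsSeparated 1 S := by
  intro x hx y hy hxy
  obtain ⟨f, hf, hgap, -⟩ := hS x hx y hy hxy
  have : f x - f y ≤ dist x y := by
    rw [dist_eq_norm, ← map_sub]
    exact (le_abs_self _).trans ((f.le_of_opNorm_le hf _).trans (by simp))
  rw [edist_dist, ENNReal.one_lt_ofReal]
  linarith

theorem bddAbove_card_strictAntipProp [FiniteDimensional ℝ X] :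
    BddAbove {k : ℕ | ∃ S : Finset X, S.card = k ∧ (S : Set X) ⊆ sphere (0 : X) 1 ∧
      StrictAntipProp (S : Set X)} := by
  obtain ⟨N, -, hNfin, hN⟩ :=
    exists_finite_isCover_of_isCompact (ε := 1 / 2) (by norm_num) (isCompact_sphere (0 : X) 1)
  refine ⟨N.ncard, ?_⟩
  rintro _ ⟨S, rfl, hsph, hS⟩
  have : (S : Set X).encard ≤ N.encard := calc
    _ ≤ packingNumber 1 (sphere (0 : X) 1) := hS.isSeparated.encard_le_packingNumber hsph
    _ = packingNumber (2 * (1 / 2)) (sphere (0 : X) 1) := by norm_num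
    _ ≤ externalCoveringNumber (1 / 2) (sphere (0 : X) 1) :=
      packingNumber_two_mul_le_externalCoveringNumber _ _
    _ ≤ N.encard := hN.externalCoveringNumber_le_encard
  rw [Set.encard_coe_eq_coe_finsetCard, ← hNfin.cast_ncard_eq] at this
  exact_mod_cast this

theorem ncard_le_strictHalpha [FiniteDimensional ℝ X] {S : Set X} (hfin : S.Finite)
    (hsph : S ⊆ sphere 0 1) (hS : StrictAntipProp S) : S.ncard ≤ strictHalpha X :=
  le_csSup bddAbove_card_strictAntipProp
    ⟨hfin.toFinset, (Set.ncard_eq_toFinset_card S hfin).symm, by simpa, by simpa⟩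

end

theorem ncard_range_union_neg {X : Type*} [AddCommGroup X] [Module ℝ X] {ι : Type*} [Finite ι]
    [DecidableEq ι] {v : ι → X} {φ : ι → X →ₗ[ℝ] ℝ}
    (hφv : ∀ i k, φ i (v k) = if k = i then 1 else 0) :
    (Set.range v ∪ Set.range (fun i => -v i)).ncard = 2 * Nat.card ι := by
  have hinj : Function.Injective v := fun i k h => by
    simpa [hφv] using congrArg (φ k) h
  have hdisj : Disjoint (Set.range v) (Set.range fun i => -v i) := by
    refine Set.disjoint_left.2 ?_
    rintro _ ⟨i, rfl⟩ ⟨k, hk⟩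
    have := congrArg (φ i) hk
    rw [map_neg, hφv, hφv, if_pos rfl] at this
    split_ifs at this <;> norm_num at this
  rw [Set.ncard_union_eq hdisj, Set.ncard_range_of_injective hinj,
    Set.ncard_range_of_injective (f := fun i => -v i) (neg_injective.comp hinj), two_mul]

theorem Module.Basis.norm_coord_le_one {X : Type*} [NormedAddCommGroup X] [NormedSpace ℝ X]
    [FiniteDimensional ℝ X] {ι : Type*} [Fintype ι] (b : Module.Basis ι ℝ X)
    (hb : ∀ i, ‖b i‖ = 1)
    (hsupp : ∀ (α : ι → ℝ) (F : Finset ι), ‖∑ k ∈ F, α k • b k‖ ≤ ‖∑ k, α k • b k‖) (i : ι) :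
    ‖LinearMap.toContinuousLinearMap (b.coord i)‖ ≤ 1 := by
  refine ContinuousLinearMap.opNorm_le_bound _ zero_le_one fun x => ?_
  have := hsupp (b.repr x) {i}
  rw [Finset.sum_singleton, b.sum_repr, _root_.norm_smul, hb, mul_one] at this
  simpa using this

theorem suppression_unconditional_pm_isBSA_general (n : ℕ) (X : Type*)
    [NormedAddCommGroup X] [NormedSpace ℝ X] [FiniteDimensional ℝ X]
    (b : Module.Basis (Fin n) ℝ X) (hb : ∀ i, ‖b i‖ = 1)
    (hsupp : ∀ (α : Fin n → ℝ) (F : Finset (Fin n)),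
      ‖∑ k ∈ F, α k • b k‖ ≤ ‖∑ k : Fin n, α k • b k‖)
    (hgeom : StrictConvexSpace ℝ X ∨
      (∀ x : X, x ≠ 0 → ∃! g : X →L[ℝ] ℝ, ‖g‖ = 1 ∧ g x = ‖x‖))
    (A : Set X) (hA : A = Set.range (fun i => b i) ∪ Set.range (fun i => -(b i))) :
    ∃ ε : ℝ, 0 < ε ∧ IsBSA A (1 + ε) ∧ 2 * n ≤ strictHalpha X := by
  have hcoord : ∀ i k, b.coord i (b k) = if k = i then 1 else 0 := fun i k => by
    rw [b.coord_apply, b.repr_self_apply]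
  have hanti : StrictAntipProp A := hA ▸ strictAntipProp_range_union_neg
    (φ := fun i => LinearMap.toContinuousLinearMap (b.coord i)) hgeom
    (fun i => (hb i).le) (b.norm_coord_le_one hb hsupp) hcoord
  have hfin : A.Finite := hA ▸ (Set.finite_range _).union (Set.finite_range _)
  have hsph : A ⊆ sphere 0 1 := by
    rw [hA]
    rintro _ (⟨i, rfl⟩ | ⟨i, rfl⟩) <;> simp [hb]
  obtain ⟨ε, hε, hbsa⟩ := hanti.exists_isBSA hfin (hsph.trans sphere_subset_closedBall)
  refine ⟨ε, hε, hbsa, ?_⟩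
  calc 2 * n = A.ncard := by rw [hA, ncard_range_union_neg hcoord, Nat.card_fin]
    _ ≤ strictHalpha X := ncard_le_strictHalpha hfin hsph hanti

/-- Let `X` be an `n`-dimensional real Banach space with a
1-suppression unconditional normalized basis `b`. If the norm of `X` is strictly convex
or smooth, then for some `ε > 0` the set `A = {± b i}` is a bounded and separated
antipodal subset of the closed unit ball with constant `d = 1 + ε`; hence
`H'_α(X) ≥ 2n`. -/
theorem suppression_unconditional_pm_isBSA (n : ℕ) (X : Type*)
    [NormedAddCommGroup X] [NormedSpace ℝ X] [FiniteDimensional ℝ X]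
    (hdim : Module.finrank ℝ X = n)
    (b : Module.Basis (Fin n) ℝ X) (hb : ∀ i, ‖b i‖ = 1)
    (hsupp : ∀ (α : Fin n → ℝ) (F : Finset (Fin n)),
      ‖∑ k ∈ F, α k • b k‖ ≤ ‖∑ k : Fin n, α k • b k‖)
    (hgeom : StrictConvexSpace ℝ X ∨
      (∀ x : X, x ≠ 0 → ∃! g : X →L[ℝ] ℝ, ‖g‖ = 1 ∧ g x = ‖x‖))
    (A : Set X) (hA : A = Set.range (fun i => b i) ∪ Set.range (fun i => -(b i))) :
    ∃ ε : ℝ, 0 < ε ∧ IsBSA A (1 + ε) ∧ 2 * n ≤ strictHalpha X :=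
  suppression_unconditional_pm_isBSA_general n X b hb hsupp hgeom A hA

end
end

section
/- H_α(ℓ_1^3) = H'_α(ℓ_1^3) = 2³ = 8: there exist 8 points on the unit sphere of ℓ_1^3 (namely the set (5/9)·{−1,1}³ viewed inside a suitable isometric copy, equivalently the preimages under the isometry T(e_i) = x_i with x_1 = (1,1,−1/3), x_2 = (1,−1/3,1), x_3 = (−1/3,1,1)) forming a bounded and separated antipodal set with constant d = 10/9 > 1, and 8 is the largest possible cardinality of such a set. -/
/-!
Upper bound (Danzer–Grünbaum): let `S` be antipodal in an `n`-dimensional space with affine span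
the whole space, and `P` its convex hull. The copies `x + (P - x) / 2`, `x ∈ S`, lie in `P` and
each has volume `2⁻ⁿ vol P`; two of them, with centres `x ≠ y`, meet only on the hyperplane
halfway between the two supporting hyperplanes through `x` and `y`. Hence `|S| ≤ 2ⁿ`; a
degenerate `S` is antipodal inside its own, lower-dimensional, affine span.

Lower bound: the three functionals `v ↦ (T v) i` have coefficients in `[-1, 1]`, hence norm
`≤ 1` on `ℓ_1^3`, and take the values `±5/9` on the eight points, each sign pattern once. For two
distinct points some `(T ·) i` differs, so it (or its negative) is `5/9` at one, `-5/9` at the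
other, and in between on all the others: a gap of `10/9`.
-/

open Metric

noncomputable section

/-- The antipodality condition (with gap `1`). -/
def AntipProp {X : Type*} [NormedAddCommGroup X] [NormedSpace ℝ X] (S : Set X) : Prop :=
  ∀ x ∈ S, ∀ y ∈ S, x ≠ y → ∃ f : X →L[ℝ] ℝ, ‖f‖ ≤ 1 ∧
    1 ≤ f x - f y ∧ ∀ z ∈ S, f y ≤ f z ∧ f z ≤ f x

/-- The antipodal Hadwiger number `H_α(X)`. -/
def Halpha (X : Type*) [NormedAddCommGroup X] [NormedSpace ℝ X] : ℕ :=
  sSup {k : ℕ | ∃ S : Finset X, S.card = k ∧ (S : Set X) ⊆ sphere (0 : X) 1 ∧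
    AntipProp (S : Set X)}

/-- `ℓ_1^3`. -/
abbrev L13 : Type := PiLp 1 (fun _ : Fin 3 => ℝ)

open MeasureTheory Module Set

section Antipodal

variable {X : Type*} [NormedAddCommGroup X] [NormedSpace ℝ X]

def IsAntipodal (S : Set X) : Prop :=
  ∀ x ∈ S, ∀ y ∈ S, x ≠ y → ∃ f : X →L[ℝ] ℝ,
    f y < f x ∧ ∀ z ∈ S, f y ≤ f z ∧ f z ≤ f x

theorem AntipProp.isAntipodal {S : Set X} (h : AntipProp S) : IsAntipodal S := by
  intro x hx y hy hxy
  obtain ⟨f, -, hgap, hS⟩ := h x hx y hy hxy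
  exact ⟨f, by linarith, hS⟩

theorem StrictAntipProp.isAntipodal {S : Set X} (h : StrictAntipProp S) : IsAntipodal S := by
  intro x hx y hy hxy
  obtain ⟨f, -, hgap, hS⟩ := h x hx y hy hxy
  exact ⟨f, by linarith, hS⟩

theorem IsAntipodal.preimage_const_add {S : Set X} (hS : IsAntipodal S) (p : X) :
    IsAntipodal ((p + ·) ⁻¹' S) := by
  intro x hx y hy hxy
  obtain ⟨f, hgap, hbd⟩ := hS _ hx _ hy (add_right_injective p |>.ne hxy)
  refine ⟨f, by simpa using hgap, fun z hz => ?_⟩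
  simpa using hbd _ hz

theorem IsAntipodal.preimage_injective {V : Type*} [NormedAddCommGroup V] [NormedSpace ℝ V]
    {S : Set X} (hS : IsAntipodal S) {L : V →L[ℝ] X} (hL : Function.Injective L) :
    IsAntipodal (L ⁻¹' S) := by
  intro x hx y hy hxy
  obtain ⟨f, hgap, hbd⟩ := hS _ hx _ hy (hL.ne hxy)
  exact ⟨f.comp L, hgap, fun z hz => hbd _ hz⟩

theorem convexHull_subset_preimage_Icc {S : Set X} (f : X →L[ℝ] ℝ) {a b : ℝ}
    (h : ∀ z ∈ S, a ≤ f z ∧ f z ≤ b) : convexHull ℝ S ⊆ f ⁻¹' Icc a b :=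
  convexHull_min h ((convex_Icc a b).linear_preimage f.toLinearMap)

theorem addHaar_preimage_singleton [MeasurableSpace X] [BorelSpace X] [FiniteDimensional ℝ X]
    (μ : Measure X) [μ.IsAddHaarMeasure] {f : X →L[ℝ] ℝ} (hf : f ≠ 0) (c : ℝ) :
    μ (f ⁻¹' {c}) = 0 := by
  obtain ⟨v, hv⟩ : ∃ v, f v ≠ 0 := by simpa [ContinuousLinearMap.ext_iff] using hf
  let H := AffineSubspace.comap f.toLinearMap.toAffineMap (affineSpan ℝ {c})
  have hH : (H : Set X) = f ⁻¹' {c} := by ext; simp [H]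
  have hne : H ≠ ⊤ := by
    intro htop
    have : ((c + 1) / f v) • v ∈ H := htop ▸ AffineSubspace.mem_top ℝ X _
    simp [H, hv] at this
  rw [← hH]
  exact Measure.addHaar_affineSubspace μ H hne

theorem IsAntipodal.aedisjoint_homothety [MeasurableSpace X] [BorelSpace X]
    [FiniteDimensional ℝ X] (μ : Measure X) [μ.IsAddHaarMeasure] {S : Set X}
    (hS : IsAntipodal S) {x y : X} (hx : x ∈ S) (hy : y ∈ S) (hxy : x ≠ y) :
    AEDisjoint μ (AffineMap.homothety x (2⁻¹ : ℝ) '' convexHull ℝ S)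
      (AffineMap.homothety y (2⁻¹ : ℝ) '' convexHull ℝ S) := by
  obtain ⟨f, hgap, hbd⟩ := hS x hx y hy hxy
  have hslab := convexHull_subset_preimage_Icc f hbd
  have hf : f ≠ 0 := by rintro rfl; simp at hgap
  refine measure_mono_null ?_ (addHaar_preimage_singleton μ hf ((f x + f y) / 2))
  rintro _ ⟨⟨p, hp, rfl⟩, ⟨q, hq, hpq⟩⟩
  have hp' := hslab hp
  have hq' := hslab hq
  have hfpq := congrArg f hpq
  simp only [AffineMap.homothety_apply, vsub_eq_sub, vadd_eq_add, map_add, map_smul, map_sub,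
    smul_eq_mul, mem_Icc, mem_preimage] at hp' hq' hfpq ⊢
  simp only [mem_singleton_iff]
  linarith [hp'.1, hp'.2, hq'.1, hq'.2]

theorem IsAntipodal.card_le_of_affineSpan_eq_top [FiniteDimensional ℝ X] {S : Finset X}
    (hS : IsAntipodal (S : Set X)) (htop : affineSpan ℝ (S : Set X) = ⊤) :
    S.card ≤ 2 ^ finrank ℝ X := by
  borelize X
  let μ : Measure X := Measure.addHaar
  set P := convexHull ℝ (S : Set X)
  let A : X → Set X := fun x => AffineMap.homothety x (2⁻¹ : ℝ) '' P
  have hP0 : μ P ≠ 0 :=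
    ((isOpen_interior.measure_pos μ
      (interior_convexHull_nonempty_iff_affineSpan_eq_top.2 htop)).trans_le
        (measure_mono interior_subset)).ne'
  have hPtop : μ P ≠ ⊤ := (S.finite_toSet.isCompact_convexHull (𝕜 := ℝ)).measure_lt_top.ne
  have hAP : ∀ x ∈ S, A x ⊆ P := by
    rintro x hx _ ⟨p, hp, rfl⟩
    rw [AffineMap.homothety_eq_lineMap]
    exact (convex_convexHull ℝ _).lineMap_mem (subset_convexHull ℝ _ hx) hp
      ⟨by norm_num, by norm_num⟩
  have hμA : ∀ x, μ (A x) = (2 ^ finrank ℝ X)⁻¹ * μ P := by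
    intro x
    rw [Measure.addHaar_image_homothety, abs_of_nonneg (by positivity), inv_pow,
      ENNReal.ofReal_inv_of_pos (by positivity)]
    norm_num
  have hsum : (S.card : ENNReal) * ((2 ^ finrank ℝ X)⁻¹ * μ P) ≤ μ P := by
    calc (S.card : ENNReal) * ((2 ^ finrank ℝ X)⁻¹ * μ P) = ∑ x ∈ S, μ (A x) := by
          simp [hμA]
      _ = μ (⋃ x ∈ S, A x) := (measure_biUnion_finset₀
          (fun x hx y hy hxy => hS.aedisjoint_homothety μ hx hy hxy)
          (fun x _ => ((S.finite_toSet.isCompact_convexHull (𝕜 := ℝ)).image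
            (AffineMap.homothety_continuous x _)).measurableSet.nullMeasurableSet)).symm
      _ ≤ μ P := measure_mono (iUnion₂_subset hAP)
  rw [← mul_assoc] at hsum
  have hle : (S.card : ENNReal) * (2 ^ finrank ℝ X)⁻¹ ≤ 1 :=
    (ENNReal.mul_le_mul_iff_left hP0 hPtop).1 (by rwa [one_mul])
  rw [ENNReal.mul_inv_le_iff (by simp) (by simp), one_mul] at hle
  exact_mod_cast hle

theorem IsAntipodal.card_le [FiniteDimensional ℝ X] {S : Finset X}
    (hS : IsAntipodal (S : Set X)) : S.card ≤ 2 ^ finrank ℝ X := by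
  induction h : finrank ℝ X using Nat.strong_induction_on generalizing X with
  | _ n ih =>
  by_cases htop : affineSpan ℝ (S : Set X) = ⊤
  · exact h ▸ hS.card_le_of_affineSpan_eq_top htop
  classical
  obtain rfl | ⟨s₀, hs₀⟩ := S.eq_empty_or_nonempty
  · simp
  set V := vectorSpan ℝ (S : Set X)
  have hV : V ≠ ⊤ := fun hV => htop <|
    (AffineSubspace.affineSpan_eq_top_iff_vectorSpan_eq_top_of_nonempty ℝ _ _ ⟨s₀, hs₀⟩).2 hV
  have hdim : finrank ℝ V < n := h ▸ Submodule.finrank_lt hV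
  let g : V → X := fun v => s₀ + v
  have hg : Function.Injective g := fun v w hvw => Subtype.ext (add_left_cancel hvw)
  have hrange : ∀ s ∈ S, s ∈ range g := fun s hs =>
    ⟨⟨s - s₀, vsub_mem_vectorSpan ℝ hs hs₀⟩, add_sub_cancel s₀ s⟩
  let S' : Finset V := S.preimage g hg.injOn
  have hS' : IsAntipodal (S' : Set V) := by
    rw [Finset.coe_preimage]
    exact (hS.preimage_const_add s₀).preimage_injective (L := V.subtypeL) Subtype.val_injective
  have hcard : S'.card = S.card := by
    rw [Finset.card_preimage, Finset.filter_true_of_mem hrange]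
  calc S.card = S'.card := hcard.symm
    _ ≤ 2 ^ finrank ℝ V := ih _ hdim hS' rfl
    _ ≤ 2 ^ n := Nat.pow_le_pow_right two_pos hdim.le

theorem sSup_card_eq_two_pow_finrank [FiniteDimensional ℝ X] {P : Set X → Prop}
    (hP : ∀ S, P S → IsAntipodal S) (S₀ : Finset X) (hcard : S₀.card = 2 ^ finrank ℝ X)
    (hsphere : (S₀ : Set X) ⊆ sphere 0 1) (hS₀ : P S₀) :
    sSup {k : ℕ | ∃ S : Finset X, S.card = k ∧ (S : Set X) ⊆ sphere 0 1 ∧ P S} =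
      2 ^ finrank ℝ X :=
  IsGreatest.csSup_eq ⟨⟨S₀, hcard, hsphere, hS₀⟩, fun _ ⟨_, hk, _, hS⟩ => hk ▸ (hP _ hS).card_le⟩

theorem IsBSA.antipProp {S : Set X} {d : ℝ} (h : IsBSA S d) (hd : 1 ≤ d) :
    AntipProp S := fun x hx y hy hxy =>
  let ⟨f, hf, hgap, hbd⟩ := h.2 x hx y hy hxy
  ⟨f, hf, hd.trans hgap, hbd⟩

theorem IsBSA.strictAntipProp {S : Set X} {d : ℝ} (h : IsBSA S d) (hd : 1 < d) :
    StrictAntipProp S := fun x hx y hy hxy =>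
  let ⟨f, hf, hgap, hbd⟩ := h.2 x hx y hy hxy
  ⟨f, hf, hd.trans_le hgap, hbd⟩

theorem isBSA_of_abs_eq {ι : Type*} (f : ι → X →L[ℝ] ℝ) (hf : ∀ i, ‖f i‖ ≤ 1) {S : Set X}
    (hball : S ⊆ closedBall 0 1) {r : ℝ}
    (hr : ∀ z ∈ S, ∀ i, |f i z| = r) (hinj : S.InjOn fun z i => f i z) : IsBSA S (2 * r) := by
  refine ⟨hball, fun x hx y hy hxy => ?_⟩
  suffices ∃ g : X →L[ℝ] ℝ, ‖g‖ ≤ 1 ∧ g x = r ∧ g y = -r ∧ ∀ z ∈ S, |g z| = r by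
    obtain ⟨g, hg, hgx, hgy, hgS⟩ := this
    exact ⟨g, hg, by linarith, fun z hz => by rw [hgx, hgy]; exact abs_le.1 (hgS z hz).le⟩
  obtain ⟨i, hi⟩ := Function.ne_iff.1 (hinj.ne hx hy hxy)
  have hyx : f i y = -f i x :=
    (abs_eq_abs.1 ((hr y hy i).trans (hr x hx i).symm)).resolve_left hi.symm
  rcases abs_choice (f i x) with hfx | hfx <;> rw [hr x hx i] at hfx
  · exact ⟨f i, hf i, hfx.symm, by linarith, fun z hz => hr z hz i⟩
  · exact ⟨-f i, by simpa using hf i, by simp [hfx], by simp [hyx, hfx],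
      fun z hz => by simpa using hr z hz i⟩

end Antipodal

theorem PiLp.norm_sum_smul_proj_le_one {ι : Type*} [Fintype ι] (a : ι → ℝ)
    (ha : ∀ j, |a j| ≤ 1) : ‖∑ j, a j • PiLp.proj (𝕜 := ℝ) 1 (fun _ : ι => ℝ) j‖ ≤ 1 := by
  refine ContinuousLinearMap.opNorm_le_bound _ zero_le_one fun v => ?_
  rw [one_mul, PiLp.norm_eq_of_L1]
  simp only [FunLike.coe_sum, Finset.sum_apply, FunLike.coe_smul, Pi.smul_apply, PiLp.proj_apply,
    smul_eq_mul, Real.norm_eq_abs]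
  refine (Finset.abs_sum_le_sum_abs _ _).trans (Finset.sum_le_sum fun j _ => ?_)
  rw [abs_mul]
  exact mul_le_of_le_one_left (abs_nonneg _) (ha j)

/-- The matrix of the isometry `T` with `T eᵢ = xᵢ`; it is symmetric, so `isoCoord i v = (T v) i`
and the eight points of `Halpha_l1_three` are `T⁻¹ ((5/9) • {-1, 1}³)`. -/
def isoMatrix : Matrix (Fin 3) (Fin 3) ℝ := !![1, 1, -1/3; 1, -1/3, 1; -1/3, 1, 1]

def isoCoord (i : Fin 3) : L13 →L[ℝ] ℝ :=
  ∑ j, isoMatrix i j • PiLp.proj (𝕜 := ℝ) 1 (fun _ : Fin 3 => ℝ) j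

theorem isoCoord_apply (i : Fin 3) (v : L13) : isoCoord i v = ∑ j, isoMatrix i j * v j := by
  simp [isoCoord]

theorem norm_isoCoord_le_one (i : Fin 3) : ‖isoCoord i‖ ≤ 1 :=
  PiLp.norm_sum_smul_proj_le_one _ fun j => by
    fin_cases i <;> fin_cases j <;> norm_num [isoMatrix, abs_le]

theorem isoCoord_injective : Function.Injective fun (v : L13) i => isoCoord i v := by
  intro v w h
  have h0 := congrFun h 0
  have h1 := congrFun h 1
  have h2 := congrFun h 2
  simp [isoCoord_apply, Fin.sum_univ_three, isoMatrix] at h0 h1 h2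
  ext j
  fin_cases j <;> simp <;> linarith

/-- `H_α(ℓ_1^3) = H'_α(ℓ_1^3) = 2³ = 8`: the `8` points
`±(1/3,1/3,1/3), ±(2/3,−1/6,−1/6), ±(−1/6,−1/6,2/3), ±(1/6,−2/3,1/6)` — the preimages
under the isometry `T(e_i) = x_i` (with `x₁ = (1,1,−1/3)`, `x₂ = (1,−1/3,1)`,
`x₃ = (−1/3,1,1)`) of the vertices `(5/9)·{−1,1}³` — lie on the unit sphere of `ℓ_1^3`
and form a bounded and separated antipodal set with constant `d = 10/9 > 1`, and `8` is
the largest possible cardinality of such a set. -/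
theorem Halpha_l1_three (v₁ v₂ v₃ v₄ : L13)
    (h₁ : v₁ = (WithLp.equiv 1 (Fin 3 → ℝ)).symm ![1/3, 1/3, 1/3])
    (h₂ : v₂ = (WithLp.equiv 1 (Fin 3 → ℝ)).symm ![2/3, -1/6, -1/6])
    (h₃ : v₃ = (WithLp.equiv 1 (Fin 3 → ℝ)).symm ![-1/6, -1/6, 2/3])
    (h₄ : v₄ = (WithLp.equiv 1 (Fin 3 → ℝ)).symm ![1/6, -2/3, 1/6])
    (S : Set L13) (hS : S = {v₁, -v₁, v₂, -v₂, v₃, -v₃, v₄, -v₄}) :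
    S.ncard = 8 ∧ S ⊆ sphere (0 : L13) 1 ∧ IsBSA S (10 / 9) ∧
    Halpha L13 = 8 ∧ strictHalpha L13 = 8 := by
  subst hS h₁ h₂ h₃ h₄
  set S : Set L13 := {_, _, _, _, _, _, _, _}
  have hpts : ∀ z ∈ S, ‖z‖ = 1 ∧ ∀ i, |isoCoord i z| = 5 / 9 := by
    simp only [S, mem_insert_iff, mem_singleton_iff]
    rintro z (rfl | rfl | rfl | rfl | rfl | rfl | rfl | rfl) <;> refine ⟨?_, fun i => ?_⟩ <;>
      try fin_cases i
    all_goals norm_num [PiLp.norm_eq_of_L1, Fin.sum_univ_three, isoCoord_apply, isoMatrix,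
      abs_of_pos, Matrix.cons_val_two, Matrix.tail_cons, Matrix.head_cons]
  have hcard : S.ncard = 8 := by
    rw [Set.ncard_eq_toFinset_card']
    simp only [S, Set.toFinset_insert, Set.toFinset_singleton]
    simp [Finset.card_insert_eq_ite, WithLp.ext_iff, funext_iff, Fin.forall_fin_succ]
    all_goals norm_num
  have hsphere : S ⊆ sphere 0 1 := fun z hz => mem_sphere_zero_iff_norm.2 (hpts z hz).1
  have hBSA : IsBSA S (10 / 9) := by
    convert isBSA_of_abs_eq isoCoord norm_isoCoord_le_one (hsphere.trans sphere_subset_closedBall)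
      (fun z hz => (hpts z hz).2) isoCoord_injective.injOn using 1
    norm_num
  have hfin : S.Finite := toFinite S
  have hdim : 2 ^ finrank ℝ L13 = 8 := by
    rw [(WithLp.linearEquiv 1 ℝ (Fin 3 → ℝ)).finrank_eq]
    simp
  have h8 : hfin.toFinset.card = 2 ^ finrank ℝ L13 := by
    rw [hdim, ← Set.ncard_eq_toFinset_card S hfin, hcard]
  refine ⟨hcard, hsphere, hBSA, ?_, ?_⟩ <;> rw [← hdim] <;>
    rw [← hfin.coe_toFinset] at hsphere hBSA
  · exact sSup_card_eq_two_pow_finrank (fun _ h => h.isAntipodal) _ h8 hsphere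
      (hBSA.antipProp (by norm_num))
  · exact sSup_card_eq_two_pow_finrank (fun _ h => h.isAntipodal) _ h8 hsphere
      (hBSA.strictAntipProp (by norm_num))

end
end
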